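/- arXiv:2312.03197 — 5 statements merged into one kernel-verified Lean document; each statement's English description precedes it below -/
import Mathlib

section
/- Let (X,τ) be a topological space, A ⊆ X, and for each x ∈ A \ interior(A) let U_x be an open set with x ∈ U_x (a neighbourhood assignment). Let I_A be the ideal generated by {U_x \ A : x ∈ A \ interior(A)}, i.e. S ∈ I_A iff there is a finite set F ⊆ A \ interior(A) with S ⊆ ⋃_{x∈F} (U_x \ A). Then A is open in the topology τ* on X generated by the family {V \ I : V open in τ, I ∈ I_A}. -/
open TopologicalSpace Set Topology

/-- The ideal generated by the sets `U x \ A` for `x ∈ A \ interior A`: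
`S` belongs to it iff `S` is contained in a finite union of such sets. -/
def genIdeal {X : Type*} [TopologicalSpace X] (A : Set X) (U : X → Set X) : Set (Set X) :=
  {S | ∃ F : Finset X, ↑F ⊆ A \ interior A ∧ S ⊆ ⋃ x ∈ F, U x \ A}

/-- The topology `τ*` generated by `{V \ I : V open, I in the ideal}`. -/
def starTop {X : Type*} [TopologicalSpace X] (I : Set (Set X)) : TopologicalSpace X :=
  generateFrom {s | ∃ V J, IsOpen V ∧ J ∈ I ∧ s = V \ J}

/-! A point `x` of `A` either lies in the open set `interior A`, or it has its assigned
neighbourhood `U x`; then `U x ∩ A = U x \ (U x \ A)` is a basic `τ*`-open set inside `A`,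
because `U x \ A` is a generator of the ideal. -/

section StarTop

variable {X : Type*} [TopologicalSpace X] {I : Set (Set X)} {V J : Set X}

theorem isOpen_starTop_diff (hV : IsOpen V) (hJ : J ∈ I) : IsOpen[starTop I] (V \ J) :=
  isOpen_generateFrom_of_mem ⟨V, J, hV, hJ, rfl⟩

theorem isOpen_starTop_of_isOpen (hI : ∅ ∈ I) (hV : IsOpen V) : IsOpen[starTop I] V := by
  simpa using isOpen_starTop_diff hV hI

end StarTop

section GenIdeal

variable {X : Type*} [TopologicalSpace X] {A : Set X} {U : X → Set X}

theorem empty_mem_genIdeal : ∅ ∈ genIdeal A U :=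
  ⟨∅, by simp, empty_subset _⟩

theorem diff_mem_genIdeal {x : X} (hx : x ∈ A \ interior A) : U x \ A ∈ genIdeal A U :=
  ⟨{x}, by simpa using hx, by simp⟩

end GenIdeal

theorem stmt0 {X : Type*} [TopologicalSpace X] (A : Set X) (U : X → Set X)
    (hUopen : ∀ x ∈ A \ interior A, IsOpen (U x))
    (hUmem : ∀ x ∈ A \ interior A, x ∈ U x) :
    IsOpen[starTop (genIdeal A U)] A := by
  refine (@isOpen_iff_forall_mem_open X (starTop (genIdeal A U)) A).2 fun x hxA => ?_
  by_cases hx : x ∈ interior A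
  · exact ⟨interior A, interior_subset,
      isOpen_starTop_of_isOpen empty_mem_genIdeal isOpen_interior, hx⟩
  · have hx' : x ∈ A \ interior A := ⟨hxA, hx⟩
    refine ⟨U x \ (U x \ A), ?_, isOpen_starTop_diff (hUopen x hx') (diff_mem_genIdeal hx'), ?_⟩
      <;> rw [sdiff_sdiff_right_self]
    exacts [inter_subset_right, ⟨hUmem x hx', hxA⟩]
end

section
/- Let (X,τ) be a topological space and A ⊆ X a set that is not preopen in τ (i.e. A ⊄ interior(closure(A))). For each x ∈ A \ interior(A) let U_x be an open set with x ∈ U_x, let I_A be the ideal generated by {U_x \ A : x ∈ A \ interior(A)}, and let τ* be the topology generated by {V \ I : V ∈ τ, I ∈ I_A}. Then (X,τ*) is not connected: there exists a subset of X that is simultaneously open and closed in τ*, nonempty, and different from X. -/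
/-!
Pick `x ∈ A` outside `interior (closure A)`. The set `B = U x \ closure A` is contained in
`U x \ A`, so it lies in the ideal and is therefore `τ*`-closed; being `τ`-open it is also
`τ*`-open. It is nonempty because the open neighbourhood `U x` of `x` cannot lie inside
`closure A`, and it is proper because it misses `x ∈ closure A`.
-/

open TopologicalSpace Set Topology

section StarTop

variable {X : Type*} [TopologicalSpace X]

theorem isOpen_starTop_sdiff {I : Set (Set X)} {V J : Set X} (hV : IsOpen V) (hJ : J ∈ I) :
    IsOpen[starTop I] (V \ J) :=
  GenerateOpen.basic _ ⟨V, J, hV, hJ, rfl⟩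

theorem isClosed_starTop_of_mem {I : Set (Set X)} {J : Set X} (hJ : J ∈ I) :
    IsClosed[starTop I] J :=
  @IsClosed.mk X (starTop I) J <| by
    rw [compl_eq_univ_sdiff]
    exact isOpen_starTop_sdiff isOpen_univ hJ

theorem isClopen_starTop_of_isOpen_of_mem {I : Set (Set X)} (hI : ∅ ∈ I) {V : Set X}
    (hV : IsOpen V) (hVI : V ∈ I) : @IsClopen X (starTop I) V := by
  refine ⟨isClosed_starTop_of_mem hVI, ?_⟩
  simpa using isOpen_starTop_sdiff (I := I) hV hI

end StarTop

section GenIdeal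

variable {X : Type*} [TopologicalSpace X] {A : Set X} {U : X → Set X}

theorem mem_genIdeal_of_subset {x : X} (hx : x ∈ A \ interior A) {S : Set X}
    (hS : S ⊆ U x \ A) : S ∈ genIdeal A U :=
  ⟨{x}, by simpa using hx, by simpa using hS⟩

end GenIdeal

theorem stmt6 {X : Type*} [TopologicalSpace X] (A : Set X)
    (hA : ¬ A ⊆ interior (closure A))
    (U : X → Set X)
    (hUopen : ∀ x ∈ A \ interior A, IsOpen (U x))
    (hUmem : ∀ x ∈ A \ interior A, x ∈ U x) :
    ∃ B : Set X, IsOpen[starTop (genIdeal A U)] B ∧ IsClosed[starTop (genIdeal A U)] B ∧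
      B ≠ ∅ ∧ B ≠ univ := by
  obtain ⟨x, hxA, hx⟩ := not_subset.mp hA
  have hxA' : x ∈ A \ interior A := ⟨hxA, fun h => hx (interior_mono subset_closure h)⟩
  have hBτ : IsOpen (U x \ closure A) := (hUopen x hxA').sdiff isClosed_closure
  have hBI : U x \ closure A ∈ genIdeal A U :=
    mem_genIdeal_of_subset hxA' (sdiff_subset_sdiff_right subset_closure)
  obtain ⟨hBclosed, hBopen⟩ := isClopen_starTop_of_isOpen_of_mem empty_mem_genIdeal hBτ hBI
  refine ⟨U x \ closure A, hBopen, hBclosed, ?_, ?_⟩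
  · rw [Ne, sdiff_eq_empty]
    exact fun hU => hx (interior_maximal hU (hUopen x hxA') (hUmem x hxA'))
  · exact ne_univ_iff_exists_notMem _ |>.mpr ⟨x, fun h => h.2 (subset_closure hxA)⟩
end

section
/- Let (X,τ) be a topological space, A ⊆ X, and for each x ∈ A \ interior(A) let U_x be an open set with x ∈ U_x; let I_A be the ideal generated by {U_x \ A : x ∈ A \ interior(A)}. If the only open set of τ belonging to I_A is the empty set (τ ∩ I_A = {∅}), then A is preopen, i.e. A ⊆ interior(closure(A)). -/
open TopologicalSpace Set Topology

theorem sdiff_closure_mem_genIdeal {X : Type*} [TopologicalSpace X] {A : Set X} (U : X → Set X)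
    {x : X} (hx : x ∈ A \ interior A) : U x \ closure A ∈ genIdeal A U :=
  ⟨{x}, by simpa using hx, by
    simpa only [Finset.mem_singleton, iUnion_iUnion_eq_left] using
      sdiff_subset_sdiff_right (s := U x) (subset_closure (s := A))⟩

theorem stmt8 {X : Type*} [TopologicalSpace X] (A : Set X) (U : X → Set X)
    (hUopen : ∀ x ∈ A \ interior A, IsOpen (U x))
    (hUmem : ∀ x ∈ A \ interior A, x ∈ U x)
    (h : {S : Set X | IsOpen S} ∩ genIdeal A U = {∅}) :
    A ⊆ interior (closure A) := by
  intro x hxA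
  by_cases hxi : x ∈ interior A
  · exact interior_mono subset_closure hxi
  have hx : x ∈ A \ interior A := ⟨hxA, hxi⟩
  have hempty : U x \ closure A ∈ ({∅} : Set (Set X)) :=
    h ▸ ⟨(hUopen x hx).sdiff isClosed_closure, sdiff_closure_mem_genIdeal U hx⟩
  exact mem_interior.mpr ⟨U x, sdiff_eq_empty.mp hempty, hUopen x hx, hUmem x hx⟩
end

section
/- Let (X,τ) be a connected topological space and A ⊆ X a preopen set (A ⊆ interior(closure(A))). Let I be the principal ideal of all subsets of interior(closure(A)) \ A, and let τ* be the topology on X generated by {V \ I : V ∈ τ, I ⊆ interior(closure(A)) \ A}. Then (X,τ*) is connected. -/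
/-!
The sets `V \ J` with `V` open and `J ⊆ D` form a basis of `τ*`. If `D` has empty interior, two
disjoint `τ*`-open sets `s`, `t` cannot have `x ∈ s` in the `τ`-closure of `t`: basic neighbourhoods
`V \ J ⊆ s` of `x` and `W \ K ⊆ t` of a point `y ∈ V ∩ t` would give a nonempty open set `V ∩ W`
inside `J ∪ K ⊆ D`. Hence every `τ*`-clopen set is `τ`-clopen, and connectedness transfers.
For `D = int(cl A) \ A` the interior is empty because `cl A \ A` has empty interior for every `A`.
-/

open TopologicalSpace Set Topology

section StarTop

variable {X : Type*} [TopologicalSpace X]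

lemma interior_closure_diff_self (A : Set X) : interior (closure A \ A) = ∅ :=
  interior_eq_empty_iff_dense_compl.2 dense_coborder

lemma isTopologicalBasis_starTop (D : Set X) :
    @IsTopologicalBasis X (starTop {S | S ⊆ D})
      {s | ∃ V J, IsOpen V ∧ J ⊆ D ∧ s = V \ J} := by
  refine @IsTopologicalBasis.mk X (starTop _) _ ?_ ?_ rfl
  · rintro _ ⟨V₁, J₁, hV₁, hJ₁, rfl⟩ _ ⟨V₂, J₂, hV₂, hJ₂, rfl⟩ x hx
    refine ⟨(V₁ ∩ V₂) \ (J₁ ∪ J₂), ⟨_, _, hV₁.inter hV₂, union_subset hJ₁ hJ₂, rfl⟩, ?_, ?_⟩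
    · exact ⟨⟨hx.1.1, hx.2.1⟩, fun h => h.elim hx.1.2 hx.2.2⟩
    · exact fun z hz => ⟨⟨hz.1.1, fun h => hz.2 (.inl h)⟩, ⟨hz.1.2, fun h => hz.2 (.inr h)⟩⟩
  · exact eq_univ_of_forall fun x =>
      ⟨univ \ ∅, ⟨univ, ∅, isOpen_univ, empty_subset D, rfl⟩, mem_univ x, notMem_empty x⟩

lemma disjoint_closure_of_isOpen_starTop {D s t : Set X} (hD : interior D = ∅)
    (hs : IsOpen[starTop {S | S ⊆ D}] s) (ht : IsOpen[starTop {S | S ⊆ D}] t)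
    (hst : Disjoint s t) : Disjoint s (closure t) := by
  have hB := isTopologicalBasis_starTop D
  refine disjoint_left.2 fun x hxs hxt => ?_
  obtain ⟨_, ⟨V, J, hV, hJD, rfl⟩, hxV, hVs⟩ := hB.exists_subset_of_mem_open (t := starTop _) hxs hs
  obtain ⟨y, hyV, hyt⟩ := mem_closure_iff.1 hxt V hV hxV.1
  obtain ⟨_, ⟨W, K, hW, hKD, rfl⟩, hyW, hWt⟩ := hB.exists_subset_of_mem_open (t := starTop _) hyt ht
  have hVW : V ∩ W ⊆ D := fun z hz => by_contra fun hzD =>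
    disjoint_left.1 hst (hVs ⟨hz.1, fun h => hzD (hJD h)⟩) (hWt ⟨hz.2, fun h => hzD (hKD h)⟩)
  have hy : y ∈ interior D := interior_maximal hVW (hV.inter hW) ⟨hyV, hyW.1⟩
  simp [hD] at hy

lemma isClopen_of_isOpen_starTop {D u : Set X} (hD : interior D = ∅)
    (hu : IsOpen[starTop {S | S ⊆ D}] u) (hu' : IsOpen[starTop {S | S ⊆ D}] uᶜ) :
    IsClopen u := by
  have hcl : closure u ⊆ u :=
    (disjoint_closure_of_isOpen_starTop hD hu' hu disjoint_compl_left).subset_compl_left.trans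
      (compl_compl u).subset
  have hcl' : closure uᶜ ⊆ uᶜ :=
    (disjoint_closure_of_isOpen_starTop hD hu hu' disjoint_compl_right).subset_compl_left
  exact ⟨isClosed_of_closure_subset hcl,
    by simpa using (isClosed_of_closure_subset hcl').isOpen_compl⟩

lemma connectedSpace_starTop [ConnectedSpace X] {D : Set X} (hD : interior D = ∅) :
    @ConnectedSpace X (starTop {S | S ⊆ D}) :=
  have : @PreconnectedSpace X (starTop {S | S ⊆ D}) :=
    (@preconnectedSpace_iff_clopen X (starTop _)).2 fun _ hu =>
      isClopen_iff.1 (isClopen_of_isOpen_starTop hD hu.2 hu.1.1)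
  @ConnectedSpace.mk X (starTop _) this inferInstance

end StarTop

theorem stmt11_general {X : Type*} [TopologicalSpace X] [ConnectedSpace X] (A : Set X) :
    @ConnectedSpace X (starTop {S : Set X | S ⊆ interior (closure A) \ A}) :=
  connectedSpace_starTop <| subset_eq_empty
    (interior_mono (sdiff_subset_sdiff_left interior_subset)) (interior_closure_diff_self A)

theorem stmt11 {X : Type*} [TopologicalSpace X] [ConnectedSpace X] (A : Set X)
    (hA : A ⊆ interior (closure A)) :
    @ConnectedSpace X (starTop {S : Set X | S ⊆ interior (closure A) \ A}) :=
  stmt11_general A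
end

section
/- Let (X,τ) be a topological space and D' a family of dense subsets of X with the dense finite intersection property. Let I_D be the ideal generated by {X \ D : D ∈ D'}, and let τ* be the topology generated by {V \ I : V ∈ τ, I ∈ I_D}. Then the semiregularization of τ equals the semiregularization of τ*, i.e. the topology generated by the regular open sets of τ equals the topology generated by the regular open sets of τ*. -/
open TopologicalSpace Set Topology

/-- A family of subsets has the dense finite intersection property if every member is
dense and the intersection of every finite subfamily is dense. -/
def DFIP {X : Type*} [TopologicalSpace X] (𝒟 : Set (Set X)) : Prop :=
  (∀ D ∈ 𝒟, Dense D) ∧ ∀ F : Finset (Set X), ↑F ⊆ 𝒟 → Dense (⋂₀ (F : Set (Set X)))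

/-- The ideal generated by the complements of the members of `𝒟`. -/
def denseIdeal {X : Type*} (𝒟 : Set (Set X)) : Set (Set X) :=
  {S | ∃ F : Finset (Set X), ↑F ⊆ 𝒟 ∧ S ⊆ ⋃ D ∈ F, Dᶜ}

/-- The semiregularization of a topology: the topology generated by its regular open sets. -/
def semireg {X : Type*} (t : TopologicalSpace X) : TopologicalSpace X :=
  generateFrom {W : Set X | W = @interior X t (@closure X t W)}

section Helpers
variable {Y : Type*}

lemma isOpen_inter' (t' : TopologicalSpace Y) {a b : Set Y} (ha : IsOpen[t'] a)
    (hb : IsOpen[t'] b) : IsOpen[t'] (a ∩ b) := by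
  letI := t'; exact ha.inter hb

lemma isOpen_interior' (t' : TopologicalSpace Y) (s : Set Y) :
    IsOpen[t'] (@interior Y t' s) := by
  letI := t'; exact isOpen_interior

lemma interior_subset' (t' : TopologicalSpace Y) {s : Set Y} :
    @interior Y t' s ⊆ s := by
  letI := t'; exact interior_subset

lemma interior_maximal' (t' : TopologicalSpace Y) {s u : Set Y} (h₁ : u ⊆ s)
    (h₂ : IsOpen[t'] u) : u ⊆ @interior Y t' s := by
  letI := t'; exact interior_maximal h₁ h₂

end Helpers

lemma ideal_empty_mem {X : Type*} (𝒟 : Set (Set X)) : ∅ ∈ denseIdeal 𝒟 :=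
  ⟨∅, by simp, by simp⟩

lemma ideal_union_mem {X : Type*} {𝒟 : Set (Set X)} {J K : Set X} (hJ : J ∈ denseIdeal 𝒟)
    (hK : K ∈ denseIdeal 𝒟) : J ∪ K ∈ denseIdeal 𝒟 := by
  classical
  obtain ⟨F, hF, hJs⟩ := hJ
  obtain ⟨G, hG, hKs⟩ := hK
  refine ⟨F ∪ G, ?_, ?_⟩
  · rw [Finset.coe_union]
    exact union_subset hF hG
  · rw [Finset.set_biUnion_union]
    exact union_subset (hJs.trans subset_union_left) (hKs.trans subset_union_right)

lemma ideal_interior_empty {X : Type*} [t : TopologicalSpace X] {𝒟 : Set (Set X)}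
    (h : DFIP 𝒟) {J : Set X} (hJ : J ∈ denseIdeal 𝒟) : interior J = ∅ := by
  obtain ⟨F, hF, hs⟩ := hJ
  have hd := h.2 F hF
  have hsub : J ⊆ (⋂₀ (F : Set (Set X)))ᶜ := by
    intro x hx hmem
    have hx' := hs hx
    simp only [mem_iUnion, mem_compl_iff] at hx'
    obtain ⟨D, hD, hxD⟩ := hx'
    exact hxD (hmem D hD)
  have h2 := interior_mono hsub
  rwa [interior_compl, hd.closure_eq, compl_univ, subset_empty_iff] at h2

lemma star_le {X : Type*} [t : TopologicalSpace X] (𝒟 : Set (Set X)) :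
    starTop (denseIdeal 𝒟) ≤ t := by
  intro s hs
  exact TopologicalSpace.GenerateOpen.basic s ⟨s, ∅, hs, ideal_empty_mem 𝒟, by simp⟩

lemma star_nhds {X : Type*} [t : TopologicalSpace X] (𝒟 : Set (Set X)) {U : Set X}
    (hU : IsOpen[starTop (denseIdeal 𝒟)] U) :
    ∀ x ∈ U, ∃ V J, IsOpen V ∧ J ∈ denseIdeal 𝒟 ∧ x ∈ V \ J ∧ V \ J ⊆ U := by
  have hU' : TopologicalSpace.GenerateOpen
      {s | ∃ V J, IsOpen V ∧ J ∈ denseIdeal 𝒟 ∧ s = V \ J} U := hU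
  clear hU
  induction hU' with
  | basic s hs =>
    obtain ⟨V, J, hV, hJ, rfl⟩ := hs
    exact fun x hx => ⟨V, J, hV, hJ, hx, subset_rfl⟩
  | univ =>
    exact fun x _ => ⟨univ, ∅, isOpen_univ, ideal_empty_mem 𝒟, by simp, by simp⟩
  | inter s u hs hu ihs ihu =>
    intro x hx
    obtain ⟨V₁, J₁, hV₁, hJ₁, hx₁, hsub₁⟩ := ihs x hx.1
    obtain ⟨V₂, J₂, hV₂, hJ₂, hx₂, hsub₂⟩ := ihu x hx.2
    refine ⟨V₁ ∩ V₂, J₁ ∪ J₂, hV₁.inter hV₂, ideal_union_mem hJ₁ hJ₂,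
      ⟨⟨hx₁.1, hx₂.1⟩, fun hc => hc.elim hx₁.2 hx₂.2⟩, ?_⟩
    intro y hy
    exact ⟨hsub₁ ⟨hy.1.1, fun hc => hy.2 (Or.inl hc)⟩,
      hsub₂ ⟨hy.1.2, fun hc => hy.2 (Or.inr hc)⟩⟩
  | sUnion S hS ih =>
    intro x hx
    obtain ⟨s, hsS, hxs⟩ := hx
    obtain ⟨V, J, hV, hJ, hxVJ, hsub⟩ := ih s hsS x hxs
    exact ⟨V, J, hV, hJ, hxVJ, hsub.trans (subset_sUnion_of_mem hsS)⟩

/-- A nonempty `starTop`-open set is not contained in any ideal member. -/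
lemma star_open_not_small {X : Type*} [t : TopologicalSpace X] {𝒟 : Set (Set X)}
    (h : DFIP 𝒟) {U : Set X} (hU : IsOpen[starTop (denseIdeal 𝒟)] U)
    (hne : U.Nonempty) {J : Set X} (hJ : J ∈ denseIdeal 𝒟) : ¬ U ⊆ J := by
  intro hsub
  obtain ⟨y, hy⟩ := hne
  obtain ⟨V, J', hV, hJ', hyVJ, hsub'⟩ := star_nhds 𝒟 hU y hy
  have hVsub : V ⊆ J ∪ J' := by
    intro z hz
    by_cases hzJ' : z ∈ J'
    · exact Or.inr hzJ'
    · exact Or.inl (hsub (hsub' ⟨hz, hzJ'⟩))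
  have hint : V ⊆ interior (J ∪ J') := interior_maximal hVsub hV
  rw [ideal_interior_empty h (ideal_union_mem hJ hJ')] at hint
  exact hint hyVJ.1

lemma star_closure {X : Type*} [t : TopologicalSpace X] {𝒟 : Set (Set X)} (h : DFIP 𝒟)
    {U : Set X} (hU : IsOpen[starTop (denseIdeal 𝒟)] U) :
    @closure X (starTop (denseIdeal 𝒟)) U = closure U := by
  have hmc : ∀ (t'' : TopologicalSpace X) (s : Set X) (x : X),
      x ∈ @closure X t'' s ↔ ∀ o, IsOpen[t''] o → x ∈ o → (o ∩ s).Nonempty :=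
    fun _ _ _ => mem_closure_iff
  apply subset_antisymm
  · intro x hx
    rw [hmc t]
    intro O hO hxO
    rw [hmc (starTop (denseIdeal 𝒟))] at hx
    exact hx O (hO.mono (star_le 𝒟)) hxO
  · intro x hx
    rw [hmc (starTop (denseIdeal 𝒟))]
    intro O hO hxO
    obtain ⟨V, J, hV, hJ, hxVJ, hsubO⟩ := star_nhds 𝒟 hO x hxO
    have hVU : (V ∩ U).Nonempty := by
      rw [hmc t] at hx
      exact hx V hV hxVJ.1
    have hVUopen : IsOpen[starTop (denseIdeal 𝒟)] (V ∩ U) :=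
      isOpen_inter' _ (hV.mono (star_le 𝒟)) hU
    have hnot := star_open_not_small h hVUopen hVU hJ
    rw [not_subset] at hnot
    obtain ⟨z, hz, hzJ⟩ := hnot
    exact ⟨z, hsubO ⟨hz.1, hzJ⟩, hz.2⟩

lemma star_interior {X : Type*} [t : TopologicalSpace X] {𝒟 : Set (Set X)} (h : DFIP 𝒟)
    {C : Set X} (hC : IsClosed C) :
    @interior X (starTop (denseIdeal 𝒟)) C = interior C := by
  apply subset_antisymm
  · intro x hx
    have hop : IsOpen[starTop (denseIdeal 𝒟)] (@interior X (starTop (denseIdeal 𝒟)) C) :=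
      isOpen_interior' _ C
    obtain ⟨V, J, hV, hJ, hxVJ, hsub⟩ := star_nhds 𝒟 hop x hx
    have hsubC : V \ J ⊆ C := hsub.trans (interior_subset' _)
    have hVC : V \ C ⊆ J := by
      intro z hz
      by_contra hzJ
      exact hz.2 (hsubC ⟨hz.1, hzJ⟩)
    have hVCopen : IsOpen (V \ C) := hV.sdiff hC
    have : V \ C ⊆ interior J := interior_maximal hVC hVCopen
    rw [ideal_interior_empty h hJ, subset_empty_iff, diff_eq_empty] at this
    exact mem_interior.mpr ⟨V, this, hV, hxVJ.1⟩
  · exact interior_maximal' _ interior_subset (isOpen_interior.mono (star_le 𝒟))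

theorem stmt15 {X : Type*} [t : TopologicalSpace X] (𝒟 : Set (Set X)) (h : DFIP 𝒟) :
    semireg t = semireg (starTop (denseIdeal 𝒟)) := by
  have key : {W : Set X | W = @interior X t (@closure X t W)} =
      {W : Set X | W = @interior X (starTop (denseIdeal 𝒟))
        (@closure X (starTop (denseIdeal 𝒟)) W)} := by
    ext W
    simp only [mem_setOf_eq]
    constructor
    · intro hW
      have hWopen : IsOpen W := by rw [hW]; exact isOpen_interior
      have hWopen' : IsOpen[starTop (denseIdeal 𝒟)] W := hWopen.mono (star_le 𝒟)
      rw [star_closure h hWopen', star_interior h isClosed_closure, ← hW]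
    · intro hW
      have hWopen' : IsOpen[starTop (denseIdeal 𝒟)] W := by
        rw [hW]; exact isOpen_interior' _ _
      rw [star_closure h hWopen', star_interior h isClosed_closure] at hW
      exact hW
  rw [semireg, semireg, key]
end
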